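/- arXiv:1903.03070 — 4 statements merged into one kernel-verified Lean document; each statement's English description precedes it below -/
import Mathlib

section
/- Let X be a set, ▷ a relation between finite subsets of X and elements of X, and Q a predicate on X. If Q holds for every element of the closure of the empty set, then there exists a subset M of X which is maximal with respect to ▷ and Q, i.e., M is closed, Q holds on M, and for every x not in M, Q fails on M ⊕ x. -/
/-! The relation-closed sets on which `Q` holds are closed under unions of nonempty chains,
because a finite set of generators in such a union already lies in one member of the chain.
Zorn's lemma, started at `⟨∅⟩`, gives a maximal such set `M`; since `M ⊆ M ⊕ x` and
`M ⊕ x` is closed, `Q` holding on `M ⊕ x` would force `M ⊕ x = M`, i.e. `x ∈ M`. -/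

/-- `S ▷* y` : there is a finite subset `A ⊆ S` with `A ▷ y`. -/
def GenFrom {X : Type*} (rel : Finset X → X → Prop) (S : Set X) (y : X) : Prop :=
  ∃ A : Finset X, ↑A ⊆ S ∧ rel A y

/-- The iterates of the closure operation: `S₀ = S`,
`S_{i+1}` adds everything generated (`▷*`) from what has been collected up to stage `i`. -/
def ClosureSeq {X : Type*} (rel : Finset X → X → Prop) (S : Set X) : ℕ → Set X
  | 0 => S
  | i + 1 => ClosureSeq rel S i ∪ {y | GenFrom rel (ClosureSeq rel S i) y}

/-- The closure `⟨S⟩` of `S` with respect to `▷`. -/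
def Closure {X : Type*} (rel : Finset X → X → Prop) (S : Set X) : Set X :=
  ⋃ i, ClosureSeq rel S i

/-- `S ⊕ x := ⟨S ∪ {x}⟩`. -/
def Oplus {X : Type*} (rel : Finset X → X → Prop) (S : Set X) (x : X) : Set X :=
  Closure rel (S ∪ {x})

/-- `S` is closed w.r.t. `▷*`. -/
def IsRelClosed {X : Type*} (rel : Finset X → X → Prop) (S : Set X) : Prop :=
  ∀ y, GenFrom rel S y → y ∈ S

section RelClosure

variable {X : Type*} (rel : Finset X → X → Prop)

lemma closureSeq_mono (S : Set X) : Monotone (ClosureSeq rel S) :=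
  monotone_nat_of_le_succ fun _ => Set.subset_union_left

lemma self_subset_closure (S : Set X) : S ⊆ Closure rel S :=
  Set.subset_iUnion (ClosureSeq rel S) 0

lemma isRelClosed_closure (S : Set X) : IsRelClosed rel (Closure rel S) := by
  rintro y ⟨A, hA, hAy⟩
  obtain ⟨n, hn⟩ :=
    (closureSeq_mono rel S).directed_le.exists_mem_subset_of_finset_subset_biUnion hA
  exact Set.mem_iUnion.mpr ⟨n + 1, Or.inr ⟨A, hn, hAy⟩⟩

lemma subset_oplus (S : Set X) (x : X) : S ⊆ Oplus rel S x :=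
  Set.subset_union_left.trans (self_subset_closure rel _)

lemma mem_oplus_self (S : Set X) (x : X) : x ∈ Oplus rel S x :=
  self_subset_closure rel _ (Set.mem_union_right S rfl)

lemma IsChain.isRelClosed_sUnion {c : Set (Set X)} (hchain : IsChain (· ⊆ ·) c)
    (hne : c.Nonempty) (hclosed : ∀ S ∈ c, IsRelClosed rel S) : IsRelClosed rel (⋃₀ c) := by
  rintro y ⟨A, hA, hAy⟩
  obtain ⟨S, hSc, hAS⟩ :=
    hchain.directedOn.exists_mem_subset_of_finite_of_subset_sUnion hne A.finite_toSet hA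
  exact Set.subset_sUnion_of_mem hSc (hclosed S hSc y ⟨A, hAS, hAy⟩)

end RelClosure

theorem stmt0 {X : Type*} (rel : Finset X → X → Prop) (Q : X → Prop)
    (hQ : ∀ y ∈ Closure rel (∅ : Set X), Q y) :
    ∃ M : Set X, IsRelClosed rel M ∧ (∀ y ∈ M, Q y) ∧
      ∀ x ∉ M, ¬ ∀ y ∈ Oplus rel M x, Q y := by
  set 𝒮 : Set (Set X) := {S | IsRelClosed rel S ∧ ∀ y ∈ S, Q y}
  have h𝒮_chain :
      ∀ c ⊆ 𝒮, IsChain (· ⊆ ·) c → c.Nonempty → ∃ M ∈ 𝒮, ∀ S ∈ c, S ⊆ M :=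
    fun c hc𝒮 hchain hne =>
      ⟨⋃₀ c, ⟨hchain.isRelClosed_sUnion rel hne fun S hS => (hc𝒮 hS).1,
        fun _ ⟨S, hS, hyS⟩ => (hc𝒮 hS).2 _ hyS⟩, fun _ => Set.subset_sUnion_of_mem⟩
  obtain ⟨M, -, hM⟩ :=
    zorn_subset_nonempty 𝒮 h𝒮_chain _ ⟨isRelClosed_closure rel ∅, hQ⟩
  refine ⟨M, hM.prop.1, hM.prop.2, fun x hxM hQx => hxM ?_⟩
  have hM_eq : M = Oplus rel M x :=
    hM.eq_of_subset ⟨isRelClosed_closure rel _, hQx⟩ (subset_oplus rel M x)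
  exact hM_eq ▸ mem_oplus_self rel M x
end

section
/- Let X be countable with enumeration (xₙ)ₙ∈ℕ, ▷ a relation between finite subsets of X and elements of X, and Q a predicate on X. Suppose M ⊆ X satisfies, for all n ∈ ℕ: xₙ ∈ M if and only if Q((M↾n) ⊕ xₙ). If Q(⟨∅⟩) holds, then M is maximal with respect to ▷ and Q, i.e., M is closed, Q(M) holds, and ¬Q(M ⊕ x) for every x ∉ M. -/
/-- The initial segment `S↾n = S ∩ {x_m | m < n}` of `S` w.r.t. the enumeration `x`. -/
def InitSeg {X : Type*} (x : ℕ → X) (S : Set X) (n : ℕ) : Set X :=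
  S ∩ {y | ∃ m < n, x m = y}

/-!
Along the enumeration, `M↾(n+1)` is either `M↾n` or `M↾n ∪ {xₙ}`, the latter only when
`Q((M↾n) ⊕ xₙ)`; so by induction `Q(⟨M↾n⟩)` for every `n`. Since `▷` only uses finitely many
premises, `⟨M⟩` is the increasing union of the `⟨M↾n⟩`, whence `Q(⟨M⟩)`. Now if `M ▷* xₙ` or if
`Q(M ⊕ xₙ)`, then `Q((M↾n) ⊕ xₙ)` because `(M↾n) ⊕ xₙ` lies in `⟨M⟩`, resp. in `M ⊕ xₙ`;
either way `xₙ ∈ M`.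
-/

section GenFrom

variable {X : Type*} {rel : Finset X → X → Prop}

lemma GenFrom.mono {S T : Set X} {y : X} (hST : S ⊆ T) (h : GenFrom rel S y) :
    GenFrom rel T y :=
  let ⟨A, hA, hrel⟩ := h
  ⟨A, hA.trans hST, hrel⟩

lemma GenFrom.exists_of_iUnion {ι : Type*} [Nonempty ι] {T : ι → Set X}
    (hT : Directed (· ⊆ ·) T) {y : X} (h : GenFrom rel (⋃ i, T i) y) :
    ∃ i, GenFrom rel (T i) y :=
  let ⟨A, hA, hrel⟩ := h
  let ⟨i, hi⟩ := hT.exists_mem_subset_of_finset_subset_biUnion hA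
  ⟨i, A, hi, hrel⟩

end GenFrom

namespace FinitaryClosure

variable {X : Type*} {rel : Finset X → X → Prop}

lemma isRelClosed_iUnion {ι : Type*} [Nonempty ι] {T : ι → Set X}
    (hT : Directed (· ⊆ ·) T) (hclosed : ∀ i, IsRelClosed rel (T i)) :
    IsRelClosed rel (⋃ i, T i) := fun y hy =>
  let ⟨i, hi⟩ := GenFrom.exists_of_iUnion hT hy
  Set.mem_iUnion.2 ⟨i, hclosed i y hi⟩

lemma monotone_closureSeq (S : Set X) : Monotone (ClosureSeq rel S) :=
  monotone_nat_of_le_succ fun _ => Set.subset_union_left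

lemma subset_closure (S : Set X) : S ⊆ Closure rel S :=
  Set.subset_iUnion (ClosureSeq rel S) 0

lemma isRelClosed_closure (S : Set X) : IsRelClosed rel (Closure rel S) := fun _ hy =>
  let ⟨i, hi⟩ := GenFrom.exists_of_iUnion (monotone_closureSeq S).directed_le hy
  Set.mem_iUnion.2 ⟨i + 1, Or.inr hi⟩

lemma closure_minimal {S T : Set X} (hST : S ⊆ T) (hT : IsRelClosed rel T) :
    Closure rel S ⊆ T := by
  refine Set.iUnion_subset fun i => ?_
  induction i with
  | zero => exact hST
  | succ i ih =>
    rintro y (hy | hy)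
    · exact ih hy
    · exact hT y (hy.mono ih)

lemma closure_mono {S T : Set X} (hST : S ⊆ T) : Closure rel S ⊆ Closure rel T :=
  closure_minimal (hST.trans (subset_closure T)) (isRelClosed_closure T)

lemma closure_iUnion_subset {ι : Type*} [Nonempty ι] {S : ι → Set X}
    (hS : Directed (· ⊆ ·) S) : Closure rel (⋃ i, S i) ⊆ ⋃ i, Closure rel (S i) :=
  closure_minimal (Set.iUnion_mono fun i => subset_closure (S i))
    (isRelClosed_iUnion (hS.mono_comp (g := Closure rel) _ fun _ _ => closure_mono) fun i => isRelClosed_closure (S i))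

lemma oplus_mono {S T : Set X} (hST : S ⊆ T) (y : X) : Oplus rel S y ⊆ Oplus rel T y :=
  closure_mono (Set.union_subset_union_left {y} hST)

lemma oplus_subset_closure {S T : Set X} {y : X} (hST : S ⊆ T) (hy : y ∈ Closure rel T) :
    Oplus rel S y ⊆ Closure rel T :=
  closure_minimal (Set.union_subset (hST.trans (subset_closure T)) (Set.singleton_subset_iff.2 hy))
    (isRelClosed_closure T)

end FinitaryClosure

section InitSegLemmas

variable {X : Type*} (x : ℕ → X) (S : Set X)

lemma initSeg_zero : InitSeg x S 0 = ∅ := by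
  simp [InitSeg]

lemma initSeg_succ (n : ℕ) : InitSeg x S (n + 1) = InitSeg x S n ∪ (S ∩ {x n}) := by
  ext y
  simp only [InitSeg, Nat.lt_succ_iff_lt_or_eq, or_and_right, exists_or, exists_eq_left,
    Set.mem_union, Set.mem_inter_iff, Set.mem_ofPred_eq, Set.mem_singleton_iff, and_or_left,
    eq_comm (a := y)]

lemma initSeg_subset (n : ℕ) : InitSeg x S n ⊆ S :=
  Set.inter_subset_left

lemma monotone_initSeg : Monotone (InitSeg x S) := fun _ _ hnm _ ⟨hy, m, hm, hxm⟩ =>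
  ⟨hy, m, hm.trans_le hnm, hxm⟩

lemma iUnion_initSeg {x : ℕ → X} (hx : Function.Surjective x) : ⋃ n, InitSeg x S n = S := by
  refine Set.Subset.antisymm (Set.iUnion_subset (initSeg_subset x S)) fun y hy => ?_
  obtain ⟨m, rfl⟩ := hx y
  exact Set.mem_iUnion.2 ⟨m + 1, hy, m, Nat.lt_succ_self m, rfl⟩

end InitSegLemmas

open FinitaryClosure

section Construction

variable {X : Type*} {x : ℕ → X} {rel : Finset X → X → Prop} {Q : X → Prop} {M : Set X}

lemma closure_initSeg_subset_setOf
    (hM : ∀ n : ℕ, x n ∈ M ↔ ∀ y ∈ Oplus rel (InitSeg x M n) (x n), Q y)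
    (hQ : Closure rel ∅ ⊆ {y | Q y}) (n : ℕ) : Closure rel (InitSeg x M n) ⊆ {y | Q y} := by
  induction n with
  | zero => rwa [initSeg_zero]
  | succ n ih =>
    by_cases hn : x n ∈ M
    · rw [initSeg_succ, Set.inter_singleton_of_mem hn]
      exact (hM n).1 hn
    · rwa [initSeg_succ, Set.inter_singleton_eq_empty.2 hn, Set.union_empty]

lemma closure_subset_setOf (hx : Function.Surjective x)
    (hM : ∀ n : ℕ, x n ∈ M ↔ ∀ y ∈ Oplus rel (InitSeg x M n) (x n), Q y)
    (hQ : Closure rel ∅ ⊆ {y | Q y}) : Closure rel M ⊆ {y | Q y} := by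
  conv_lhs => rw [← iUnion_initSeg M hx]
  exact (closure_iUnion_subset (monotone_initSeg x M).directed_le).trans
    (Set.iUnion_subset (closure_initSeg_subset_setOf hM hQ))

end Construction

/-- If `M` satisfies `xₙ ∈ M ↔ Q((M↾n) ⊕ xₙ)` for all `n`, and `Q(⟨∅⟩)` holds,
then `M` is maximal w.r.t. `▷` and `Q`. -/
theorem stmt5 {X : Type*} (x : ℕ → X) (hx : Function.Surjective x)
    (rel : Finset X → X → Prop) (Q : X → Prop) (M : Set X)
    (hM : ∀ n : ℕ, x n ∈ M ↔ ∀ y ∈ Oplus rel (InitSeg x M n) (x n), Q y)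
    (hQ : ∀ y ∈ Closure rel (∅ : Set X), Q y) :
    IsRelClosed rel M ∧ (∀ y ∈ M, Q y) ∧
      ∀ z ∉ M, ¬ ∀ y ∈ Oplus rel M z, Q y := by
  have hQM : Closure rel M ⊆ {y | Q y} := closure_subset_setOf hx hM hQ
  refine ⟨?closed, fun y hy => hQM (subset_closure M hy), ?maximal⟩
  case closed =>
    intro y hy
    obtain ⟨n, rfl⟩ := hx y
    have hyM : x n ∈ Closure rel M := isRelClosed_closure M _ (hy.mono (subset_closure M))
    exact (hM n).2 fun z hz => hQM (oplus_subset_closure (initSeg_subset x M n) hyM hz)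
  case maximal =>
    intro z hz hQz
    obtain ⟨n, rfl⟩ := hx z
    exact hz ((hM n).2 fun y hy => hQz y (oplus_mono (initSeg_subset x M n) (x n) hy))
end

section
/- Let X be a countable commutative ring with enumeration (xₙ)ₙ∈ℕ, where x₀ = 0, x₁ = 1, x₂ = r. Suppose M ⊆ X and for every n with xₙ ∉ M there exist a function b : (M↾n ∪ {xₙ}) → X and an integer e > 0 with Σ_{a ∈ M↾n ∪ {xₙ}} a·b(a) = r^e. Suppose furthermore that at least one of the following holds: (1) 1 ∈ M; (2) r ∈ M; (3) there exist u, v ∈ M with u + v ∉ M; (4) there exist u ∈ M and v ∈ X with u·v ∉ M; (5) there exist u, v ∉ M with u·v ∈ M. Then there exist a nonempty finite subset A ⊆ M, a function b : A → X, and an integer e > 0 such that Σ_{a ∈ A} a·b(a) = r^e. -/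
/-- The initial segment `S↾n := S ∩ {x_m | m < n}` as a finite set, for the
enumeration `x` of the ring. -/
def RingSeg {X : Type*} [DecidableEq X] (x : ℕ → X) (M : Set X)
    [DecidablePred (· ∈ M)] (n : ℕ) : Finset X :=
  ((Finset.range n).image x).filter (· ∈ M)

/-!
Let `I` be the ideal generated by `M`; it suffices that `I` contains a positive power of `r`
(an empty combination is replaced by a zero one supported on any element of `M`). The
hypothesis on the enumeration says that `I + (y)` contains a positive power of `r` for every
`y ∉ M`. In cases (1) and (2) already `r ∈ I`. In cases (3) and (4) there is `y ∉ M` with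
`y ∈ I`, so `I + (y) = I`. In case (5), `(I + (u)) (I + (v)) ⊆ I + (uv) = I`, and the
product of the two powers of `r` lies in `I`.
-/

open Ideal

theorem exists_finset_sum_mul_eq_of_mem_span {R : Type*} [CommSemiring R] {M : Set R}
    (hM : M.Nonempty) {y : R} (hy : y ∈ span M) :
    ∃ (A : Finset R) (b : R → R), A.Nonempty ∧ ↑A ⊆ M ∧ ∑ a ∈ A, a * b a = y := by
  obtain ⟨t, htM, hyt⟩ := Submodule.mem_span_finite_of_mem_span hy
  obtain ⟨b, -, rfl⟩ := (Submodule.mem_span_finset).mp hyt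
  rcases t.eq_empty_or_nonempty with rfl | ht
  · obtain ⟨m, hm⟩ := hM
    exact ⟨{m}, 0, Finset.singleton_nonempty m, by simpa using hm, by simp⟩
  · exact ⟨t, b, ht, htM, Finset.sum_congr rfl fun a _ => mul_comm a (b a)⟩

theorem coe_ringSeg_subset {X : Type*} [DecidableEq X] (x : ℕ → X) (M : Set X)
    [DecidablePred (· ∈ M)] (n : ℕ) : ↑(RingSeg x M n) ⊆ M :=
  fun _ ha => (Finset.mem_filter.mp ha).2

theorem Ideal.sum_mul_mem_span {R : Type*} [CommSemiring R] (s : Finset R) (b : R → R) :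
    ∑ a ∈ s, a * b a ∈ span (s : Set R) :=
  sum_mem _ fun _ ha => mul_mem_right _ _ (subset_span ha)

theorem Ideal.span_insert_mul_span_insert_le {R : Type*} [CommSemiring R] {M : Set R}
    {u v : R} (huv : u * v ∈ span M) : span (insert u M) * span (insert v M) ≤ span M := by
  rw [span_insert, span_insert, sup_mul, mul_sup, mul_sup, span_singleton_mul_span_singleton]
  exact sup_le (sup_le (span_le.mpr (by simpa using huv)) mul_le_right)
    (sup_le mul_le_left mul_le_left)

theorem exists_pow_mem_span_insert_of_not_mem {X : Type*} [CommRing X] [DecidableEq X]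
    {x : ℕ → X} (hx : Function.Surjective x) {r : X} {M : Set X} [DecidablePred (· ∈ M)]
    (hf : ∀ n : ℕ, x n ∉ M → ∃ (b : X → X) (e : ℕ), 0 < e ∧
      ∑ a ∈ insert (x n) (RingSeg x M n), a * b a = r ^ e)
    (y : X) (hy : y ∉ M) : ∃ e, 0 < e ∧ r ^ e ∈ span (insert y M) := by
  obtain ⟨n, rfl⟩ := hx y
  obtain ⟨b, e, he, hsum⟩ := hf n hy
  refine ⟨e, he, span_mono ?_ (hsum ▸ sum_mul_mem_span _ b)⟩
  simpa using Set.insert_subset_insert (coe_ringSeg_subset x M n)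

theorem stmt15_general (X : Type*) [CommRing X] [DecidableEq X]
    (x : ℕ → X) (hx : Function.Surjective x) (r : X)
    (M : Set X) [DecidablePred (· ∈ M)]
    (hf : ∀ n : ℕ, x n ∉ M → ∃ (b : X → X) (e : ℕ), 0 < e ∧
      ∑ a ∈ insert (x n) (RingSeg x M n), a * b a = r ^ e)
    (hcase : (1 : X) ∈ M ∨ r ∈ M ∨
      (∃ u ∈ M, ∃ v ∈ M, u + v ∉ M) ∨
      (∃ u ∈ M, ∃ v : X, u * v ∉ M) ∨
      (∃ u v : X, u ∉ M ∧ v ∉ M ∧ u * v ∈ M)) :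
    ∃ (A : Finset X) (b : X → X) (e : ℕ), A.Nonempty ∧ ↑A ⊆ M ∧ 0 < e ∧
      ∑ a ∈ A, a * b a = r ^ e := by
  have pow_mem_span_insert := exists_pow_mem_span_insert_of_not_mem hx hf
  have pow_mem_span_of_mem_span : ∀ y ∉ M, y ∈ span M → ∃ e, 0 < e ∧ r ^ e ∈ span M := by
    intro y hy hyM
    obtain ⟨e, he, hr⟩ := pow_mem_span_insert y hy
    exact ⟨e, he, span_le.mpr (Set.insert_subset hyM subset_span) hr⟩
  suffices M.Nonempty ∧ ∃ e, 0 < e ∧ r ^ e ∈ span M by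
    obtain ⟨hM, e, he, hr⟩ := this
    obtain ⟨A, b, hA, hAM, hsum⟩ := exists_finset_sum_mul_eq_of_mem_span hM hr
    exact ⟨A, b, e, hA, hAM, he, hsum⟩
  rcases hcase with h1 | hr | ⟨u, hu, v, hv, huv⟩ | ⟨u, hu, v, huv⟩ | ⟨u, v, hu, hv, huv⟩
  · exact ⟨⟨1, h1⟩, 1, one_pos, by simpa using mul_mem_left _ r (subset_span h1)⟩
  · exact ⟨⟨r, hr⟩, 1, one_pos, by simpa using subset_span hr⟩
  · exact ⟨⟨u, hu⟩, pow_mem_span_of_mem_span _ huv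
      (add_mem (subset_span hu) (subset_span hv))⟩
  · exact ⟨⟨u, hu⟩, pow_mem_span_of_mem_span _ huv (mul_mem_right _ _ (subset_span hu))⟩
  · obtain ⟨e, he, hru⟩ := pow_mem_span_insert u hu
    obtain ⟨d, -, hrv⟩ := pow_mem_span_insert v hv
    exact ⟨⟨u * v, huv⟩, e + d, Nat.add_pos_left he d,
      span_insert_mul_span_insert_le (subset_span huv) (pow_add r e d ▸ mul_mem_mul hru hrv)⟩

/-- Lemma 9 of the paper: if whenever `xₙ ∉ M` the set `M↾n ∪ {xₙ}` generates a positive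
power of `r`, and `M` fails to be a prime ideal not containing `r` in one of the five
listed ways, then some nonempty finite subset `A ⊆ M` generates a positive power of `r`. -/
theorem stmt15 (X : Type*) [CommRing X] [Countable X] [DecidableEq X]
    (x : ℕ → X) (hx : Function.Surjective x) (r : X)
    (hx0 : x 0 = 0) (hx1 : x 1 = 1) (hx2 : x 2 = r)
    (M : Set X) [DecidablePred (· ∈ M)]
    (hf : ∀ n : ℕ, x n ∉ M → ∃ (b : X → X) (e : ℕ), 0 < e ∧
      ∑ a ∈ insert (x n) (RingSeg x M n), a * b a = r ^ e)
    (hcase : (1 : X) ∈ M ∨ r ∈ M ∨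
      (∃ u ∈ M, ∃ v ∈ M, u + v ∉ M) ∨
      (∃ u ∈ M, ∃ v : X, u * v ∉ M) ∨
      (∃ u v : X, u ∉ M ∧ v ∉ M ∧ u * v ∈ M)) :
    ∃ (A : Finset X) (b : X → X) (e : ℕ), A.Nonempty ∧ ↑A ⊆ M ∧ 0 < e ∧
      ∑ a ∈ A, a * b a = r ^ e :=
  stmt15_general X x hx r M hf hcase
end

section
/- Let X be a countable commutative ring with enumeration (xₙ)ₙ∈ℕ, where x₀ = 0, x₁ = 1, x₂ = r. Suppose M ⊆ X and for every n with xₙ ∉ M there exist a function b : (M↾n ∪ {xₙ}) → X and an integer e > 0 with Σ_{a ∈ M↾n ∪ {xₙ}} a·b(a) = r^e. Suppose at least one of the following holds: (1) 1 ∈ M; (2) r ∈ M; (3) there exist u, v ∈ M with u + v ∉ M; (4) there exist u ∈ M and v ∈ X with u·v ∉ M; (5) there exist u, v ∉ M with u·v ∈ M. Then there exist n ∈ ℕ with xₙ ∈ M, a function b : (M↾n ∪ {xₙ}) → X, and an integer e > 0 such that Σ_{a ∈ M↾n ∪ {xₙ}} a·b(a) = r^e. -/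
namespace Ideal

variable {R : Type*} [CommRing R]

theorem exists_pos_pow_mem_of_mem_radical {I : Ideal R} {r : R} (h : r ∈ I.radical) :
    ∃ e, 0 < e ∧ r ^ e ∈ I := by
  obtain ⟨n, hn⟩ := h
  exact ⟨n + 1, n.succ_pos, by rw [pow_succ]; exact I.mul_mem_right r hn⟩

theorem mem_span_finset_iff_exists_sum_mul [DecidableEq R] {s : Finset R} {y : R} :
    y ∈ span (s : Set R) ↔ ∃ b : R → R, ∑ a ∈ s, a * b a = y := by
  constructor
  · intro h
    obtain ⟨b, -, rfl⟩ := Submodule.mem_span_finset.1 h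
    exact ⟨b, Finset.sum_congr rfl fun a _ => mul_comm a (b a)⟩
  · rintro ⟨b, rfl⟩
    exact sum_mem _ fun a ha => mul_mem_right _ _ (subset_span ha)

theorem exists_sum_mul_eq_pos_pow_iff [DecidableEq R] {s : Finset R} {r : R} :
    (∃ (b : R → R) (e : ℕ), 0 < e ∧ ∑ a ∈ s, a * b a = r ^ e) ↔
      r ∈ (span (s : Set R)).radical := by
  constructor
  · rintro ⟨b, e, -, hb⟩
    exact ⟨e, mem_span_finset_iff_exists_sum_mul.2 ⟨b, hb⟩⟩
  · intro h
    obtain ⟨e, he, hre⟩ := exists_pos_pow_mem_of_mem_radical h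
    obtain ⟨b, hb⟩ := mem_span_finset_iff_exists_sum_mul.1 hre
    exact ⟨b, e, he, hb⟩

theorem span_insert_eq_span {S : Set R} {a : R} (h : a ∈ span S) :
    span (insert a S) = span S :=
  Submodule.span_insert_eq_span h

theorem span_insert_mul_span_insert_le_s16 {S : Set R} {u v : R} (huv : u * v ∈ span S) :
    span (insert u S) * span (insert v S) ≤ span S := by
  rw [span_insert, span_insert, sup_mul, mul_sup, mul_sup, span_singleton_mul_span_singleton]
  refine sup_le (sup_le ?_ mul_le_right) (sup_le mul_le_left mul_le_left)
  rwa [span_le, Set.singleton_subset_iff]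

end Ideal

open Ideal

section RingSeg

variable {X : Type*} [DecidableEq X] {x : ℕ → X} {M : Set X} [DecidablePred (· ∈ M)]

@[simp]
theorem mem_ringSeg {n : ℕ} {a : X} :
    a ∈ RingSeg x M n ↔ (∃ m < n, x m = a) ∧ a ∈ M := by
  simp [RingSeg]

theorem ringSeg_subset (n : ℕ) : (RingSeg x M n : Set X) ⊆ M :=
  fun _ ha => (mem_ringSeg.1 ha).2

theorem exists_subset_insert_ringSeg (hx : Function.Surjective x) {T : Finset X}
    (hTM : (T : Set X) ⊆ M) (hT : T.Nonempty) :
    ∃ n, x n ∈ M ∧ T ⊆ insert (x n) (RingSeg x M n) := by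
  let i := Function.surjInv hx
  have hi : ∀ a, x (i a) = a := Function.surjInv_eq hx
  obtain ⟨t, ht, hmax⟩ := T.exists_max_image i hT
  refine ⟨i t, (hi t).symm ▸ hTM ht, fun a ha => ?_⟩
  rcases (hmax a ha).lt_or_eq with hlt | heq
  · exact Finset.mem_insert_of_mem (mem_ringSeg.2 ⟨⟨i a, hlt, hi a⟩, hTM ha⟩)
  · exact Finset.mem_insert.2 (Or.inl (by rw [← heq, hi]))

variable [CommRing X] {r : X}

theorem mem_radical_span_insert_of_notMem
    (hf : ∀ n : ℕ, x n ∉ M → ∃ (b : X → X) (e : ℕ), 0 < e ∧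
      ∑ a ∈ insert (x n) (RingSeg x M n), a * b a = r ^ e)
    (hx : Function.Surjective x) {a : X} (ha : a ∉ M) :
    r ∈ (span (insert a M)).radical := by
  obtain ⟨n, rfl⟩ := hx a
  refine radical_mono (span_mono ?_) (exists_sum_mul_eq_pos_pow_iff.1 (hf n ha))
  rw [Finset.coe_insert]
  exact Set.insert_subset_insert (ringSeg_subset n)

theorem exists_ringSeg_of_mem_radical_span (hx : Function.Surjective x) (hM : M.Nonempty)
    (hr : r ∈ (span M).radical) :
    ∃ (n : ℕ) (b : X → X) (e : ℕ), x n ∈ M ∧ 0 < e ∧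
      ∑ a ∈ insert (x n) (RingSeg x M n), a * b a = r ^ e := by
  obtain ⟨m, hm⟩ := hM
  obtain ⟨e, he, hre⟩ := exists_pos_pow_mem_of_mem_radical hr
  obtain ⟨T, hTM, hT⟩ := Submodule.mem_span_finite_of_mem_span hre
  obtain ⟨n, hn, hsub⟩ := exists_subset_insert_ringSeg hx (M := M) (T := insert m T)
    (by rw [Finset.coe_insert]; exact Set.insert_subset hm hTM) (Finset.insert_nonempty m T)
  have hsubT : (T : Set X) ⊆ ↑(insert (x n) (RingSeg x M n)) :=
    Finset.coe_subset.2 ((Finset.subset_insert m T).trans hsub)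
  obtain ⟨b, e', he', hb⟩ :=
    exists_sum_mul_eq_pos_pow_iff.2 (radical_mono (span_mono hsubT) ⟨e, hT⟩)
  exact ⟨n, b, e', hn, he', hb⟩

end RingSeg

theorem stmt16_general (X : Type*) [CommRing X] [DecidableEq X]
    (x : ℕ → X) (hx : Function.Surjective x) (r : X)
    (M : Set X) [DecidablePred (· ∈ M)]
    (hf : ∀ n : ℕ, x n ∉ M → ∃ (b : X → X) (e : ℕ), 0 < e ∧
      ∑ a ∈ insert (x n) (RingSeg x M n), a * b a = r ^ e)
    (hcase : (1 : X) ∈ M ∨ r ∈ M ∨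
      (∃ u ∈ M, ∃ v ∈ M, u + v ∉ M) ∨
      (∃ u ∈ M, ∃ v : X, u * v ∉ M) ∨
      (∃ u v : X, u ∉ M ∧ v ∉ M ∧ u * v ∈ M)) :
    ∃ (n : ℕ) (b : X → X) (e : ℕ), x n ∈ M ∧ 0 < e ∧
      ∑ a ∈ insert (x n) (RingSeg x M n), a * b a = r ^ e := by
  have hins : ∀ a ∉ M, r ∈ (span (insert a M)).radical := fun _ =>
    mem_radical_span_insert_of_notMem hf hx
  have hM : M.Nonempty := by
    rcases hcase with h | h | ⟨u, h, -⟩ | ⟨u, h, -⟩ | ⟨u, v, -, -, h⟩ <;>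
      exact ⟨_, h⟩
  refine exists_ringSeg_of_mem_radical_span hx hM ?_
  rcases hcase with h1 | hr | ⟨u, hu, v, hv, huv⟩ | ⟨u, hu, v, huv⟩ |
    ⟨u, v, hu, hv, huv⟩
  · exact le_radical (by simpa using mul_mem_left _ r (subset_span h1))
  · exact le_radical (subset_span hr)
  · rw [← span_insert_eq_span (add_mem (subset_span hu) (subset_span hv))]
    exact hins _ huv
  · rw [← span_insert_eq_span (mul_mem_right v _ (subset_span hu))]
    exact hins _ huv
  · refine radical_mono (span_insert_mul_span_insert_le_s16 (subset_span huv)) ?_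
    rw [radical_mul]
    exact ⟨hins u hu, hins v hv⟩

/-- Lemma 10 of the paper: under the same hypotheses as Lemma 9, there are `n` with
`xₙ ∈ M`, coefficients `b` and an exponent `e > 0` such that `M↾n ∪ {xₙ}` generates
`r^e` via `b`. -/
theorem stmt16 (X : Type*) [CommRing X] [Countable X] [DecidableEq X]
    (x : ℕ → X) (hx : Function.Surjective x) (r : X)
    (hx0 : x 0 = 0) (hx1 : x 1 = 1) (hx2 : x 2 = r)
    (M : Set X) [DecidablePred (· ∈ M)]
    (hf : ∀ n : ℕ, x n ∉ M → ∃ (b : X → X) (e : ℕ), 0 < e ∧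
      ∑ a ∈ insert (x n) (RingSeg x M n), a * b a = r ^ e)
    (hcase : (1 : X) ∈ M ∨ r ∈ M ∨
      (∃ u ∈ M, ∃ v ∈ M, u + v ∉ M) ∨
      (∃ u ∈ M, ∃ v : X, u * v ∉ M) ∨
      (∃ u v : X, u ∉ M ∧ v ∉ M ∧ u * v ∈ M)) :
    ∃ (n : ℕ) (b : X → X) (e : ℕ), x n ∈ M ∧ 0 < e ∧
      ∑ a ∈ insert (x n) (RingSeg x M n), a * b a = r ^ e :=
  stmt16_general X x hx r M hf hcase
end
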